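/- Let G be a group in which every maximal locally nilpotent subgroup is malnormal, and suppose G is not locally nilpotent. Then G is a domain: every nontrivial normal subgroup of G has trivial centralizer. -/

import Mathlib

/-! Pick `c ≠ 1` centralizing `K` and a maximal locally nilpotent `M ∋ c` (Zorn). Every element
of `K` fixes `c ∈ M` under conjugation, so malnormality puts `K` inside `M`; then for any `g` and
`1 ≠ k ∈ K`, normality gives `g⁻¹ k g ∈ K ≤ M`, so malnormality forces `g ∈ M`. Thus `M = G`, and
`G` would be locally nilpotent. -/

def Malnormal {G : Type*} [Group G] (H : Subgroup G) : Prop :=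
  ∀ x : G, x ∉ H → ∀ h ∈ H, x⁻¹ * h * x ∈ H → h = 1

/-- The subgroup `H` is locally nilpotent: every finitely generated subgroup
contained in `H` is nilpotent. -/
def LocNilp {G : Type*} [Group G] (H : Subgroup G) : Prop :=
  ∀ K : Subgroup G, K ≤ H → K.FG → Group.IsNilpotent K

section

variable {G : Type*} [Group G]

namespace LocNilp

theorem of_isMulCommutative (H : Subgroup G) [IsMulCommutative H] : LocNilp H := by
  intro K hKH _
  have : IsMulCommutative K :=
    .of_setLike_mul_comm fun _ ha _ hb => setLike_mul_comm (s := H) (hKH ha) (hKH hb)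
  exact ⟨1, Subgroup.upperCentralSeries_one_eq_top_iff.2 this⟩

theorem sSup_of_isChain {c : Set (Subgroup G)} (hc : IsChain (· ≤ ·) c) (hne : c.Nonempty)
    (hln : ∀ H ∈ c, LocNilp H) : LocNilp (sSup c) := by
  rintro K hK ⟨S, rfl⟩
  have hdir : DirectedOn (· ≤ ·) c := hc.directedOn
  have hS : (S : Set G) ⊆ ⋃ H ∈ c, (H : Set G) := fun g hg => by
    obtain ⟨H, hH, hgH⟩ := (Subgroup.mem_sSup_of_directedOn hne hdir).1
      (hK (Subgroup.subset_closure hg))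
    exact Set.mem_biUnion hH hgH
  obtain ⟨H, hH, hSH⟩ := hdir.exists_mem_subset_of_finset_subset_biUnion hne hS
  exact hln H hH _ ((Subgroup.closure_le H).2 hSH) ⟨S, rfl⟩

theorem exists_le_maximal {H : Subgroup G} (hH : LocNilp H) :
    ∃ M : Subgroup G, H ≤ M ∧ Maximal LocNilp M :=
  zorn_le_nonempty₀ {H : Subgroup G | LocNilp H}
    (fun c hcs hc y hy => ⟨sSup c, sSup_of_isChain hc ⟨y, hy⟩ hcs, fun _ => le_sSup⟩) H hH

end LocNilp

namespace Malnormal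

variable {M : Subgroup G}

theorem mem_of_conj_mem (hM : Malnormal M) {h g : G} (hh : h ∈ M) (h1 : h ≠ 1)
    (hconj : g⁻¹ * h * g ∈ M) : g ∈ M := by
  by_contra hg
  exact h1 (hM g hg h hh hconj)

theorem le_of_mem_centralizer {K : Subgroup G} (hM : Malnormal M) {c : G} (hcM : c ∈ M)
    (hc1 : c ≠ 1) (hcK : c ∈ Subgroup.centralizer (K : Set G)) : K ≤ M := fun g hg =>
  hM.mem_of_conj_mem hcM hc1 <| by
    rwa [mul_assoc, ← Subgroup.mem_centralizer_iff.1 hcK g hg, inv_mul_cancel_left]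

theorem eq_top_of_normal_le {K : Subgroup G} (hM : Malnormal M) (hK : K.Normal) (hK1 : K ≠ ⊥)
    (hKM : K ≤ M) : M = ⊤ := by
  obtain ⟨k, hkK, hk1⟩ := K.bot_or_exists_ne_one.resolve_left hK1
  refine eq_top_iff.2 fun g _ => hM.mem_of_conj_mem (hKM hkK) hk1 (hKM ?_)
  simpa using hK.conj_mem k hkK g⁻¹

end Malnormal

end

theorem stmt6 {G : Type*} [Group G]
    (hmal : ∀ M : Subgroup G, Maximal LocNilp M → Malnormal M)
    (hnotln : ¬ LocNilp (⊤ : Subgroup G)) :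
    ∀ K : Subgroup G, K.Normal → K ≠ ⊥ → Subgroup.centralizer (K : Set G) = ⊥ := by
  intro K hK hK1
  by_contra hC
  obtain ⟨c, hcK, hc1⟩ := (Subgroup.centralizer (K : Set G)).bot_or_exists_ne_one.resolve_left hC
  obtain ⟨M, hcM, hM⟩ := (LocNilp.of_isMulCommutative (Subgroup.zpowers c)).exists_le_maximal
  have hKM : K ≤ M := (hmal M hM).le_of_mem_centralizer (hcM (Subgroup.mem_zpowers c)) hc1 hcK
  have hMtop : M = ⊤ := (hmal M hM).eq_top_of_normal_le hK hK1 hKM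
  exact hnotln (hMtop ▸ hM.1)
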